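/- Let 𝓛̄ : (ℝ² \ {0}) × ℝ² → ℝ be given by 𝓛̄(x, v) = 1/|x|⁴ − 2|v|²/|x|³ + 6⟨x, v⟩²/|x|⁵, and let x : ℝ → ℝ² be a twice differentiable solution of the planar Kepler problem (so x(t) ≠ 0 and ẍ(t) = −x(t)/|x(t)|³ for all t). Then the Euler–Lagrange expression of 𝓛̄ evaluated along the solution, EL(𝓛̄)(t) = ∇ₓ𝓛̄(x(t), ẋ(t)) − d/dt[∇ᵥ𝓛̄(x(t), ẋ(t))], equals 4x/|x|⁶ − 6|ẋ|²x/|x|⁵ + 30⟨x, ẋ⟩²x/|x|⁷ − 12⟨x, ẋ⟩ẋ/|x|⁵ for all t. -/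

import Mathlib

/-!
Both gradients of `𝓛̄` have closed forms, obtained from the derivative
`-n ‖x‖⁻⁽ⁿ⁺²⁾ ⟪x, ·⟫` of `y ↦ ‖y‖⁻ⁿ`. Differentiating `∇ᵥ𝓛̄(x, ẋ)` in time and substituting
`ẍ = -x/‖x‖³`, hence `⟪x, ẍ⟫ = -1/‖x‖`, leaves a combination of `x` and `ẋ`, and the
claim is an identity between its coefficients and those of `∇ₓ𝓛̄(x, ẋ)`.
-/

open scoped RealInnerProductSpace

/-- The `h²`-coefficient (up to the factor `1/24`) of the modified Lagrangian of the
Störmer–Verlet method for the Kepler problem: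
`𝓛̄(x, v) = 1/|x|⁴ − 2|v|²/|x|³ + 6⟨x, v⟩²/|x|⁵`. -/
noncomputable def svPerturbation (x v : EuclideanSpace ℝ (Fin 2)) : ℝ :=
  (‖x‖ ^ 4)⁻¹ - 2 * ‖v‖ ^ 2 / ‖x‖ ^ 3 + 6 * ⟪x, v⟫ ^ 2 / ‖x‖ ^ 5

section InnerProductSpace

variable {E : Type*} [NormedAddCommGroup E] [InnerProductSpace ℝ E] {x : E}

theorem hasFDerivAt_norm_of_ne_zero (hx : x ≠ 0) :
    HasFDerivAt (‖·‖) (‖x‖⁻¹ • innerSL ℝ x) x := by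
  have h := (hasStrictFDerivAt_norm_sq x).hasFDerivAt.sqrt (by positivity)
  simp only [Real.sqrt_sq (norm_nonneg _)] at h
  refine h.congr_fderiv ?_
  ext y
  simp only [smul_apply, innerSL_apply_apply, smul_eq_mul, nsmul_eq_mul, Nat.cast_ofNat]
  field_simp

theorem hasFDerivAt_inv_norm_pow (n : ℕ) (hx : x ≠ 0) :
    HasFDerivAt (fun y : E => (‖y‖ ^ n)⁻¹) ((-n / ‖x‖ ^ (n + 2)) • innerSL ℝ x) x := by
  have hr : ‖x‖ ≠ 0 := norm_ne_zero_iff.mpr hx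
  refine ((hasDerivAt_inv (pow_ne_zero n hr)).comp_hasFDerivAt x
    ((hasFDerivAt_norm_of_ne_zero hx).pow n)).congr_fderiv ?_
  ext y
  cases n with
  | zero => simp
  | succ n =>
    simp only [smul_apply, innerSL_apply_apply, smul_eq_mul, nsmul_eq_mul, Nat.add_sub_cancel]
    field_simp
    ring

end InnerProductSpace

noncomputable def svGradX (x v : EuclideanSpace ℝ (Fin 2)) : EuclideanSpace ℝ (Fin 2) :=
  (-4 / ‖x‖ ^ 6 + 6 * ‖v‖ ^ 2 / ‖x‖ ^ 5 - 30 * ⟪x, v⟫ ^ 2 / ‖x‖ ^ 7) • x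
    + (12 * ⟪x, v⟫ / ‖x‖ ^ 5) • v

noncomputable def svGradV (x v : EuclideanSpace ℝ (Fin 2)) : EuclideanSpace ℝ (Fin 2) :=
  (-4 / ‖x‖ ^ 3) • v + (12 * ⟪x, v⟫ / ‖x‖ ^ 5) • x

theorem hasGradientAt_svPerturbation_fst {x : EuclideanSpace ℝ (Fin 2)}
    (v : EuclideanSpace ℝ (Fin 2)) (hx : x ≠ 0) :
    HasGradientAt (svPerturbation · v) (svGradX x v) x := by
  have hinner : HasFDerivAt (⟪·, v⟫) (innerSL ℝ v) x :=
    (innerSL ℝ v).hasFDerivAt.congr_of_eventuallyEq (.of_forall fun y => real_inner_comm v y)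
  have h := ((hasFDerivAt_inv_norm_pow 4 hx).sub ((hasFDerivAt_inv_norm_pow 3 hx).const_mul
    (2 * ‖v‖ ^ 2))).add (((hinner.pow 2).mul (hasFDerivAt_inv_norm_pow 5 hx)).const_mul 6)
  rw [hasGradientAt_iff_hasFDerivAt]
  refine (h.congr_fderiv ?_).congr_of_eventuallyEq (.of_forall fun y => ?_)
  · ext y
    simp only [svGradX, map_add, map_smul, InnerProductSpace.toDual_apply_apply, add_apply,
      sub_apply, smul_apply, coe_innerSL_apply, smul_eq_mul, nsmul_eq_mul, real_inner_comm y v]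
    field_simp
    ring
  · simp only [svPerturbation, Pi.add_apply, Pi.sub_apply, Pi.mul_apply]
    ring

theorem hasGradientAt_svPerturbation_snd (x v : EuclideanSpace ℝ (Fin 2)) :
    HasGradientAt (svPerturbation x ·) (svGradV x v) v := by
  have h := ((hasFDerivAt_const ((‖x‖ ^ 4)⁻¹) v).sub
    ((hasStrictFDerivAt_norm_sq v).hasFDerivAt.const_mul (2 / ‖x‖ ^ 3))).add
    (((innerSL ℝ x).hasFDerivAt.pow 2).const_mul (6 / ‖x‖ ^ 5))
  rw [hasGradientAt_iff_hasFDerivAt]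
  refine (h.congr_fderiv ?_).congr_of_eventuallyEq (.of_forall fun w => ?_)
  · ext w
    simp only [svGradV, map_add, map_smul, InnerProductSpace.toDual_apply_apply, add_apply,
      sub_apply, zero_apply, smul_apply, coe_innerSL_apply, smul_eq_mul, nsmul_eq_mul,
      real_inner_comm w v]
    ring
  · simp only [svPerturbation, Pi.add_apply, Pi.sub_apply, innerSL_apply_apply]
    ring

theorem hasDerivAt_svGradV_of_kepler {x x' : ℝ → EuclideanSpace ℝ (Fin 2)} {t : ℝ}
    (hx : HasDerivAt x (x' t) t) (hx' : HasDerivAt x' (-((‖x t‖ ^ 3)⁻¹ • x t)) t)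
    (hne : x t ≠ 0) :
    HasDerivAt (fun s => svGradV (x s) (x' s))
      ((-8 / ‖x t‖ ^ 6 + 12 * ‖x' t‖ ^ 2 / ‖x t‖ ^ 5 - 60 * ⟪x t, x' t⟫ ^ 2 / ‖x t‖ ^ 7) • x t
        + (24 * ⟪x t, x' t⟫ / ‖x t‖ ^ 5) • x' t) t := by
  have hpow (n : ℕ) := (hasFDerivAt_inv_norm_pow n hne).comp_hasDerivAt t hx
  have h := (((hpow 3).const_mul (-4)).smul hx').add
    ((((hx.inner ℝ hx').const_mul 12).mul (hpow 5)).smul hx)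
  refine (h.congr_deriv ?_).congr_of_eventuallyEq (.of_forall fun s => ?_)
  · simp only [Function.comp_apply, Pi.mul_apply, smul_apply, coe_innerSL_apply, smul_eq_mul,
      inner_neg_right, real_inner_smul_right, real_inner_self_eq_norm_sq]
    have hr : ‖x t‖ ≠ 0 := norm_ne_zero_iff.mpr hne
    match_scalars <;> field_simp <;> ring
  · simp only [svGradV, Pi.add_apply, Pi.smul_apply', Pi.mul_apply, Function.comp_apply,
      div_eq_mul_inv, mul_assoc]

/-- Along a twice differentiable solution of the planar Kepler problem, the
Euler–Lagrange expression `EL(𝓛̄)(t) = ∇ₓ𝓛̄(x, ẋ) − d/dt[∇ᵥ𝓛̄(x, ẋ)]` of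
`𝓛̄(x, v) = 1/|x|⁴ − 2|v|²/|x|³ + 6⟨x, v⟩²/|x|⁵` equals
`4x/|x|⁶ − 6|ẋ|²x/|x|⁵ + 30⟨x, ẋ⟩²x/|x|⁷ − 12⟨x, ẋ⟩ẋ/|x|⁵`.
Here `Lx` and `Lv` denote the gradients of `𝓛̄` in the first and second argument,
given along the solution as gradient hypotheses. -/
theorem EL_sv_perturbation_eq
    (x x' x'' : ℝ → EuclideanSpace ℝ (Fin 2))
    (hx : ∀ t, HasDerivAt x (x' t) t)
    (hx' : ∀ t, HasDerivAt x' (x'' t) t)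
    (hne : ∀ t, x t ≠ 0)
    (hkepler : ∀ t, x'' t = -((‖x t‖ ^ 3)⁻¹ • x t))
    (Lx Lv : EuclideanSpace ℝ (Fin 2) → EuclideanSpace ℝ (Fin 2) →
      EuclideanSpace ℝ (Fin 2))
    (hLx : ∀ t, HasGradientAt (fun y => svPerturbation y (x' t))
      (Lx (x t) (x' t)) (x t))
    (hLv : ∀ t, HasGradientAt (fun w => svPerturbation (x t) w)
      (Lv (x t) (x' t)) (x' t)) :
    ∀ t : ℝ,
      Lx (x t) (x' t) - deriv (fun s => Lv (x s) (x' s)) t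
        = (4 / ‖x t‖ ^ 6) • x t - (6 * ‖x' t‖ ^ 2 / ‖x t‖ ^ 5) • x t
          + (30 * ⟪x t, x' t⟫ ^ 2 / ‖x t‖ ^ 7) • x t
          - (12 * ⟪x t, x' t⟫ / ‖x t‖ ^ 5) • x' t := by
  intro t
  have hLx_eq : Lx (x t) (x' t) = svGradX (x t) (x' t) :=
    (hLx t).unique (hasGradientAt_svPerturbation_fst _ (hne t))
  have hLv_eq : (fun s => Lv (x s) (x' s)) = fun s => svGradV (x s) (x' s) :=
    funext fun s => (hLv s).unique (hasGradientAt_svPerturbation_snd _ _)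
  have hderiv := hasDerivAt_svGradV_of_kepler (hx t) (hkepler t ▸ hx' t) (hne t)
  rw [hLx_eq, hLv_eq, hderiv.deriv, svGradX]
  module
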